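/- If a local function f with no field-independent part (f[x,0] = 0) has vanishing Euler-Lagrange derivatives δf/δφ^i = 0 for all i, then f is a total divergence: f = ∂_μ j^μ for some local functions j^μ; explicitly, one may take j^μ = ∫_0^1 (dλ/λ) k̃^μ[x, λφ] where k̃^μ arises from integrating by parts the identity φ^i_{(ν)} ∂f/∂φ^i_{(ν)} = φ^i δf/δφ^i + ∂_μ k̃^μ. -/

import Mathlib

open MvPolynomial

abbrev JetVar (ι : Type) (n : ℕ) : Type := (ι × Multiset (Fin n)) ⊕ Fin n

abbrev LocalFn (ι : Type) (n : ℕ) : Type := MvPolynomial (JetVar ι n) ℝ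

variable {ι : Type} {n : ℕ} [DecidableEq ι]

noncomputable def tD (ν : Fin n) (f : LocalFn ι n) : LocalFn ι n :=
  pderiv (Sum.inr ν) f +
    ∑ v ∈ f.vars,
      (match v with
      | Sum.inl (i, μ) => X (Sum.inl (i, ν ::ₘ μ)) * pderiv (Sum.inl (i, μ)) f
      | Sum.inr _ => 0 : LocalFn ι n)

noncomputable def tDm (μ : Multiset (Fin n)) (f : LocalFn ι n) : LocalFn ι n :=
  (μ.sort (· ≤ ·)).foldr tD f

noncomputable def EL (i : ι) (f : LocalFn ι n) : LocalFn ι n :=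
  ∑ v ∈ f.vars,
    (match v with
    | Sum.inl (j, μ) =>
        if j = i then ((-1 : ℝ) ^ Multiset.card μ) • tDm μ (pderiv (Sum.inl (j, μ)) f)
        else 0
    | Sum.inr _ => 0 : LocalFn ι n)

noncomputable def evQ (Q : ι → LocalFn ι n) (f : LocalFn ι n) : LocalFn ι n :=
  ∑ v ∈ f.vars,
    (match v with
    | Sum.inl (i, μ) => tDm μ (Q i) * pderiv (Sum.inl (i, μ)) f
    | Sum.inr _ => 0 : LocalFn ι n)

/-- evaluation at the zero section: all jet variables φ^i_{(μ)} are set to 0,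
the x-variables are kept. -/
noncomputable def zeroSection {ι : Type} {n : ℕ} (f : LocalFn ι n) : LocalFn ι n :=
  aeval (fun v : JetVar ι n =>
    match v with
    | Sum.inl _ => 0
    | Sum.inr ν => X (Sum.inr ν)) f
/-!
The Euler operator `N = φ^i_{(ν)} ∂/∂φ^i_{(ν)}` equals `φ^i δ/δφ^i` up to a total divergence:
write `φ^i_{(ν)} = ∂_{(ν)} φ^i` and integrate the total derivatives by parts onto `∂f/∂φ^i_{(ν)}`.
So `N f` is a total divergence when all `δf/δφ^i` vanish. The homotopy operator
`∫₀¹ dλ/λ (·)[x, λφ]` multiplies a monomial of field degree `d ≥ 1` by `1/d`, hence inverts `N`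
on local functions without field-independent part, and it commutes with the total derivatives
because these preserve the field degree. Therefore `f = ∫₀¹ dλ/λ (N f)[x, λφ]` is a divergence.
-/

namespace MvPolynomial

variable {σ R M : Type*} [CommSemiring R]

theorem derivation_eq_sum_vars (D : Derivation R (MvPolynomial σ R) (MvPolynomial σ R))
    (p : MvPolynomial σ R) : D p = ∑ v ∈ p.vars, pderiv v p * D (X v) := by
  classical
  let E : Derivation R (MvPolynomial σ R) (MvPolynomial σ R) := ∑ v ∈ p.vars, D (X v) • pderiv v
  have hE : ∀ q, E q = ∑ v ∈ p.vars, pderiv v q * D (X v) := fun q => by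
    simp only [E, ← Derivation.coeFnAddMonoidHom_apply, map_sum, Finset.sum_apply]
    simp [Derivation.coeFnAddMonoidHom_apply, mul_comm]
  rw [← hE]
  refine derivation_eq_of_forall_mem_vars fun i hi => ?_
  rw [hE, Finset.sum_eq_single_of_mem i hi fun v _ hv => by simp [pderiv_X, hv.symm]]
  simp

theorem isWeightedHomogeneous_derivation_monomial [AddCancelCommMonoid M] {w : σ → M}
    {D : Derivation R (MvPolynomial σ R) (MvPolynomial σ R)}
    (hD : ∀ v, (D (X v)).IsWeightedHomogeneous w (w v)) (s : σ →₀ ℕ) (c : R) :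
    (D (monomial s c)).IsWeightedHomogeneous w (Finsupp.weight w s) := by
  rcases eq_or_ne c 0 with rfl | hc
  · simpa using isWeightedHomogeneous_zero R w _
  rw [derivation_eq_sum_vars, vars_monomial hc]
  refine IsWeightedHomogeneous.sum _ _ _ fun v hv => ?_
  have hsv : s v ≠ 0 := Finsupp.mem_support_iff.mp hv
  rw [← Finsupp.weight_sub_single_add hsv]
  exact ((isWeightedHomogeneous_monomial w s c rfl).pderiv
    (Finsupp.weight_sub_single_add hsv)).mul (hD v)

theorem aeval_eq_weightedHomogeneousComponent_zero (w : σ → ℕ) (p : MvPolynomial σ R) :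
    aeval (fun v => if w v = 0 then X v else 0) p = weightedHomogeneousComponent w 0 p := by
  induction p using MvPolynomial.induction_on' with
  | add p q hp hq => rw [map_add, map_add, hp, hq]
  | monomial s c =>
    rw [weightedHomogeneousComponent_of_mem (isWeightedHomogeneous_monomial w s c rfl),
      aeval_monomial]
    split_ifs with hs
    · rw [monomial_eq, algebraMap_eq]
      congr 1
      refine Finsupp.prod_congr fun v hv => ?_
      have : w v = 0 := Nat.eq_zero_of_le_zero <|
        hs ▸ Finsupp.le_weight_of_ne_zero' w (Finsupp.mem_support_iff.mp hv)
      simp [this]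
    · obtain ⟨v, hv, hwv⟩ := Finset.exists_ne_zero_of_sum_ne_zero
        (s := s.support) (f := fun v => s v • w v) (by rwa [Finsupp.weight_apply, eq_comm] at hs)
      have hsv : s v ≠ 0 := Finsupp.mem_support_iff.mp hv
      rw [Finsupp.prod, Finset.prod_eq_zero hv (by simp [right_ne_zero_of_smul hwv, hsv]),
        mul_zero]

noncomputable def eulerDerivation (w : σ → ℕ) :
    Derivation R (MvPolynomial σ R) (MvPolynomial σ R) :=
  mkDerivation R fun v => w v • X v

theorem eulerDerivation_monomial (w : σ → ℕ) (s : σ →₀ ℕ) (c : R) :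
    eulerDerivation w (monomial s c) = Finsupp.weight w s • monomial s c := by
  rcases eq_or_ne c 0 with rfl | hc
  · simp
  rw [derivation_eq_sum_vars, vars_monomial hc, Finsupp.weight_apply, Finsupp.sum, Finset.sum_smul]
  refine Finset.sum_congr rfl fun v _ => ?_
  rw [eulerDerivation, mkDerivation_X, mul_smul_comm, mul_comm, X_mul_pderiv_monomial, smul_smul,
    smul_eq_mul, mul_comm]

section HomotopyOperator

variable {K : Type*} [Field K] (w : σ → ℕ)

-- On a monomial of weight `d ≥ 1` this is `∫₀¹ dλ/λ · λ^d = 1/d`; weight-`0` monomials go to `0`.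
noncomputable def homotopyOp : MvPolynomial σ K →ₗ[K] MvPolynomial σ K :=
  (basisMonomials σ K).constr K fun s => (Finsupp.weight w s : K)⁻¹ • monomial s 1

theorem homotopyOp_monomial (s : σ →₀ ℕ) (c : K) :
    homotopyOp w (monomial s c) = (Finsupp.weight w s : K)⁻¹ • monomial s c := by
  have h := (basisMonomials σ K).constr_basis K
    (fun s => (Finsupp.weight w s : K)⁻¹ • monomial s (1 : K)) s
  simp only [coe_basisMonomials] at h
  rw [← mul_one c, ← smul_eq_mul, ← smul_monomial, map_smul, homotopyOp, h, smul_comm]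

theorem homotopyOp_of_isWeightedHomogeneous {p : MvPolynomial σ K} {d : ℕ}
    (hp : p.IsWeightedHomogeneous w d) : homotopyOp w p = (d : K)⁻¹ • p := by
  conv_lhs => rw [p.as_sum]
  conv_rhs => rw [p.as_sum, Finset.smul_sum]
  rw [map_sum]
  refine Finset.sum_congr rfl fun s hs => ?_
  rw [homotopyOp_monomial, hp (mem_support_iff.mp hs)]

theorem homotopyOp_derivation_comm {D : Derivation K (MvPolynomial σ K) (MvPolynomial σ K)}
    (hD : ∀ v, (D (X v)).IsWeightedHomogeneous w (w v)) (p : MvPolynomial σ K) :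
    homotopyOp w (D p) = D (homotopyOp w p) := by
  conv_lhs => rw [p.as_sum]
  conv_rhs => rw [p.as_sum]
  simp only [map_sum]
  refine Finset.sum_congr rfl fun s _ => ?_
  rw [homotopyOp_of_isWeightedHomogeneous w (isWeightedHomogeneous_derivation_monomial hD s _),
    homotopyOp_monomial, D.map_smul]

theorem homotopyOp_eulerDerivation [CharZero K] {p : MvPolynomial σ K}
    (hp : weightedHomogeneousComponent w 0 p = 0) :
    homotopyOp w (eulerDerivation w p) = p := by
  conv_lhs => rw [p.as_sum]
  conv_rhs => rw [p.as_sum]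
  simp only [map_sum]
  refine Finset.sum_congr rfl fun s hs => ?_
  have hws : Finsupp.weight w s ≠ 0 := fun h => mem_support_iff.mp hs <| by
    simpa [coeff_weightedHomogeneousComponent, h] using congrArg (coeff s) hp
  rw [eulerDerivation_monomial, map_nsmul, homotopyOp_monomial, ← Nat.cast_smul_eq_nsmul K,
    smul_smul, mul_inv_cancel₀ (Nat.cast_ne_zero.mpr hws), one_smul]

end HomotopyOperator

end MvPolynomial

section Jets

variable {ι : Type} {n : ℕ}

-- With this weight, `eulerDerivation fieldWeight` is `φ^i_{(ν)} ∂/∂φ^i_{(ν)}` and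
-- `homotopyOp fieldWeight` is `∫₀¹ dλ/λ (·)[x, λφ]`.
def fieldWeight : JetVar ι n → ℕ := Sum.elim (fun _ => 1) fun _ => 0

theorem zeroSection_eq_weightedHomogeneousComponent (f : LocalFn ι n) :
    zeroSection f = weightedHomogeneousComponent fieldWeight 0 f := by
  rw [← aeval_eq_weightedHomogeneousComponent_zero, zeroSection]
  congr 2
  funext v
  rcases v with _ | _ <;> simp [fieldWeight]

noncomputable def totalDerivation (ν : Fin n) : Derivation ℝ (LocalFn ι n) (LocalFn ι n) :=
  pderiv (Sum.inr ν) + mkDerivation ℝ (Sum.elim (fun p => X (Sum.inl (p.1, ν ::ₘ p.2))) 0)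

theorem coe_totalDerivation (ν : Fin n) : ⇑(totalDerivation (ι := ι) ν) = tD ν := by
  funext f
  rw [tD, totalDerivation, Derivation.add_apply, derivation_eq_sum_vars (mkDerivation ℝ _) f]
  congr 1
  refine Finset.sum_congr rfl fun v _ => ?_
  rcases v with ⟨i, μ⟩ | ρ <;> simp [mul_comm]

theorem totalDerivation_X_inl (ν : Fin n) (i : ι) (μ : Multiset (Fin n)) :
    totalDerivation ν (X (Sum.inl (i, μ)) : LocalFn ι n) = X (Sum.inl (i, ν ::ₘ μ)) := by
  simp [totalDerivation]

theorem totalDerivation_X_inr (ν ρ : Fin n) :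
    totalDerivation ν (X (Sum.inr ρ) : LocalFn ι n) = if ρ = ν then 1 else 0 := by
  classical
  simp [totalDerivation, pderiv_X, Pi.single_apply]

theorem totalDerivation_comm (ν ρ : Fin n) (f : LocalFn ι n) :
    totalDerivation ν (totalDerivation ρ f) = totalDerivation ρ (totalDerivation ν f) := by
  have h : ⁅totalDerivation (ι := ι) ν, totalDerivation (ι := ι) ρ⁆ = 0 := by
    ext (⟨i, μ⟩ | τ)
    · simp [Derivation.commutator_apply, totalDerivation_X_inl, Multiset.cons_swap]
    · simp [Derivation.commutator_apply, totalDerivation_X_inr, apply_ite]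
  rw [← sub_eq_zero, ← Derivation.commutator_apply, h, Derivation.zero_apply]

theorem isWeightedHomogeneous_totalDerivation_X (ν : Fin n) (v : JetVar ι n) :
    (totalDerivation ν (X v)).IsWeightedHomogeneous fieldWeight (fieldWeight v) := by
  rcases v with ⟨i, μ⟩ | ρ
  · rw [totalDerivation_X_inl]
    exact isWeightedHomogeneous_X ℝ _ _
  · rw [totalDerivation_X_inr]
    split_ifs
    · exact isWeightedHomogeneous_one ℝ _
    · exact isWeightedHomogeneous_zero ℝ _ _

theorem tDm_zero (f : LocalFn ι n) : tDm 0 f = f := by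
  simp [tDm]

theorem tDm_cons (ν : Fin n) (μ : Multiset (Fin n)) (f : LocalFn ι n) :
    tDm (ν ::ₘ μ) f = totalDerivation ν (tDm μ f) := by
  have hperm : ((ν ::ₘ μ).sort (· ≤ ·)).Perm (ν :: μ.sort (· ≤ ·)) := by
    rw [← Multiset.coe_eq_coe, Multiset.sort_eq, ← Multiset.cons_coe, Multiset.sort_eq]
  rw [tDm, hperm.foldr_eq' fun x _ y _ z => by
      simp only [← coe_totalDerivation, totalDerivation_comm],
    List.foldr_cons, ← coe_totalDerivation, tDm]

theorem tDm_totalDerivation (μ : Multiset (Fin n)) (ν : Fin n) (f : LocalFn ι n) :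
    tDm μ (totalDerivation ν f) = totalDerivation ν (tDm μ f) := by
  induction μ using Multiset.induction with
  | empty => simp only [tDm_zero]
  | cons ρ μ ih => rw [tDm_cons, tDm_cons, ih, totalDerivation_comm]

theorem tDm_X_inl (μ κ : Multiset (Fin n)) (i : ι) :
    tDm μ (X (Sum.inl (i, κ)) : LocalFn ι n) = X (Sum.inl (i, μ + κ)) := by
  induction μ using Multiset.induction with
  | empty => rw [tDm_zero, zero_add]
  | cons ρ μ ih => rw [tDm_cons, ih, totalDerivation_X_inl, Multiset.cons_add]

def divergences : Submodule ℝ (LocalFn ι n) where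
  carrier := {g | ∃ j : Fin n → LocalFn ι n, g = ∑ ν, totalDerivation ν (j ν)}
  add_mem' := by
    rintro _ _ ⟨j, rfl⟩ ⟨k, rfl⟩
    exact ⟨j + k, by simp [Finset.sum_add_distrib]⟩
  zero_mem' := ⟨0, by simp⟩
  smul_mem' := by
    rintro c _ ⟨j, rfl⟩
    exact ⟨c • j, by simp [Finset.smul_sum]⟩

theorem totalDerivation_mem_divergences (ν : Fin n) (g : LocalFn ι n) :
    totalDerivation ν g ∈ divergences :=
  ⟨Pi.single ν g, by simp [Pi.single_apply, apply_ite]⟩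

theorem homotopyOp_mem_divergences {g : LocalFn ι n} (hg : g ∈ divergences) :
    homotopyOp fieldWeight g ∈ divergences := by
  obtain ⟨j, rfl⟩ := hg
  refine ⟨fun ν => homotopyOp fieldWeight (j ν), ?_⟩
  rw [map_sum]
  exact Finset.sum_congr rfl fun ν _ =>
    homotopyOp_derivation_comm _ (isWeightedHomogeneous_totalDerivation_X ν) _

theorem tDm_mul_smodEq (μ : Multiset (Fin n)) (a b : LocalFn ι n) :
    tDm μ a * b ≡ (-1 : ℝ) ^ Multiset.card μ • (a * tDm μ b) [SMOD divergences] := by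
  induction μ using Multiset.induction generalizing b with
  | empty => simp [tDm_zero]
  | cons ν μ ih =>
    calc tDm (ν ::ₘ μ) a * b
        = totalDerivation ν (tDm μ a * b) - tDm μ a * totalDerivation ν b := by
          rw [tDm_cons, Derivation.leibniz, smul_eq_mul, smul_eq_mul]
          ring
      _ ≡ 0 - (-1 : ℝ) ^ Multiset.card μ • (a * tDm μ (totalDerivation ν b))
          [SMOD divergences] :=
          (SModEq.zero.mpr (totalDerivation_mem_divergences ν _)).sub (ih _)
      _ = (-1 : ℝ) ^ Multiset.card (ν ::ₘ μ) • (a * tDm (ν ::ₘ μ) b) := by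
          rw [tDm_totalDerivation, ← tDm_cons, Multiset.card_cons, pow_succ, mul_neg_one,
            neg_smul, zero_sub]

noncomputable def fieldVars (f : LocalFn ι n) : Finset (ι × Multiset (Fin n)) :=
  f.vars.preimage Sum.inl Sum.inl_injective.injOn

theorem EL_eq_sum_fieldVars [DecidableEq ι] (i : ι) (f : LocalFn ι n) :
    EL i f = ∑ p ∈ fieldVars f,
      if p.1 = i then (-1 : ℝ) ^ Multiset.card p.2 • tDm p.2 (pderiv (Sum.inl p) f) else 0 := by
  rw [EL, fieldVars, ← Finset.sum_preimage Sum.inl _ Sum.inl_injective.injOn _ ?_]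
  rintro (p | _) - hv
  exacts [absurd ⟨p, rfl⟩ hv, rfl]

theorem eulerDerivation_fieldWeight_eq_sum (f : LocalFn ι n) :
    eulerDerivation fieldWeight f = ∑ p ∈ fieldVars f, X (Sum.inl p) * pderiv (Sum.inl p) f := by
  rw [derivation_eq_sum_vars, fieldVars,
    ← Finset.sum_preimage Sum.inl _ Sum.inl_injective.injOn _ ?_]
  · simp [eulerDerivation, fieldWeight, mul_comm]
  · rintro (p | _) - hv
    exacts [absurd ⟨p, rfl⟩ hv, by simp [eulerDerivation, fieldWeight]]

theorem eulerDerivation_smodEq_sum_mul_EL [DecidableEq ι] (f : LocalFn ι n) :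
    eulerDerivation fieldWeight f ≡ ∑ i ∈ (fieldVars f).image Prod.fst,
      X (Sum.inl (i, 0)) * EL i f [SMOD divergences] := by
  calc eulerDerivation fieldWeight f
      = ∑ p ∈ fieldVars f, tDm p.2 (X (Sum.inl (p.1, 0))) * pderiv (Sum.inl p) f := by
        simp only [eulerDerivation_fieldWeight_eq_sum, tDm_X_inl, add_zero]
    _ ≡ ∑ p ∈ fieldVars f, (-1 : ℝ) ^ Multiset.card p.2 •
          (X (Sum.inl (p.1, 0)) * tDm p.2 (pderiv (Sum.inl p) f)) [SMOD divergences] :=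
        SModEq.sum fun p _ => tDm_mul_smodEq _ _ _
    _ = _ := by
        simp only [EL_eq_sum_fieldVars, Finset.mul_sum, mul_ite, mul_zero]
        rw [Finset.sum_comm]
        refine Finset.sum_congr rfl fun p hp => ?_
        rw [Finset.sum_ite_eq, if_pos (Finset.mem_image_of_mem _ hp), mul_smul_comm]

end Jets

/-- a local function with no field-independent part and vanishing
Euler-Lagrange derivatives is a total divergence. -/
theorem total_divergence_of_el_zero {ι : Type} {n : ℕ} [DecidableEq ι]
    (f : LocalFn ι n) (h0 : zeroSection f = 0)
    (hEL : ∀ i : ι, EL i f = 0) :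
    ∃ j : Fin n → LocalFn ι n, f = ∑ ν : Fin n, tD ν (j ν) := by
  have hEuler : eulerDerivation fieldWeight f ∈ divergences :=
    SModEq.zero.mp <| by simpa [hEL] using eulerDerivation_smodEq_sum_mul_EL f
  have hf : homotopyOp fieldWeight (eulerDerivation fieldWeight f) = f :=
    homotopyOp_eulerDerivation _ (zeroSection_eq_weightedHomogeneousComponent f ▸ h0)
  obtain ⟨j, hj⟩ := homotopyOp_mem_divergences hEuler
  refine ⟨j, ?_⟩
  rw [← hf, hj]
  simp only [coe_totalDerivation]
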